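/- arXiv:1912.13134 — 8 statements merged into one kernel-verified Lean document; each statement's English description precedes it below -/
import Mathlib

section
/- For all real numbers x, y with x > 0 and y > 0, the relative pressure satisfies the lower bound P(x|y) ≥ (1/2)·min{1/x, 1/y}·(x − y)². -/
/-!
Since `P(x|y) = x log(x/y) + y - x`, the bound is a two-sided estimate of `log` near `1`.
For `x ≤ y` it is the upper bound `log v ≤ sinh (log v) = (v - v⁻¹)/2` at `v = y/x ≥ 1`;
for `y ≤ x` it is the lower bound `-log (1 - u) ≥ u + u²/2` at `u = 1 - y/x ∈ [0, 1)`,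
the first two terms of a power series with nonnegative coefficients.
-/

open Real

noncomputable def relPressure (x y : ℝ) : ℝ :=
  x * Real.log x - y * Real.log y + (y - x) * (1 + Real.log y)

namespace Real

theorem log_le_sub_inv_div_two {v : ℝ} (hv : 1 ≤ v) : log v ≤ (v - v⁻¹) / 2 := by
  rw [← sinh_log (by linarith)]
  exact self_le_sinh_iff.mpr (log_nonneg hv)

theorem add_sq_div_two_le_neg_log_one_sub {u : ℝ} (h0 : 0 ≤ u) (h1 : u < 1) :
    u + u ^ 2 / 2 ≤ -log (1 - u) := by
  have hsum := hasSum_pow_div_log_of_abs_lt_one (abs_lt.mpr ⟨by linarith, h1⟩)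
  have h := sum_le_hasSum (Finset.range 2) (fun n _ => by positivity) hsum
  norm_num [Finset.sum_range_succ] at h
  linarith

end Real

theorem relPressure_eq {x y : ℝ} (hx : 0 < x) (hy : 0 < y) :
    relPressure x y = x * log (x / y) + y - x := by
  rw [relPressure, log_div hx.ne' hy.ne']
  ring

theorem sq_sub_div_le_relPressure_of_le {x y : ℝ} (hx : 0 < x) (hxy : x ≤ y) :
    (x - y) ^ 2 / (2 * y) ≤ relPressure x y := by
  have hy : 0 < y := hx.trans_le hxy
  have hlog := log_le_sub_inv_div_two ((one_le_div hx).mpr hxy)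
  rw [inv_div, log_div hy.ne' hx.ne'] at hlog
  rw [relPressure_eq hx hy, log_div hx.ne' hy.ne']
  calc (x - y) ^ 2 / (2 * y) = y - x - x * ((y / x - x / y) / 2) := by field_simp; ring
    _ ≤ x * (log x - log y) + y - x := by linarith [mul_le_mul_of_nonneg_left hlog hx.le]

theorem sq_sub_div_le_relPressure_of_ge {x y : ℝ} (hy : 0 < y) (hyx : y ≤ x) :
    (x - y) ^ 2 / (2 * x) ≤ relPressure x y := by
  have hx : 0 < x := hy.trans_le hyx
  have hlog := add_sq_div_two_le_neg_log_one_sub (u := 1 - y / x)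
    (sub_nonneg.mpr ((div_le_one hx).mpr hyx)) (sub_lt_self 1 (div_pos hy hx))
  rw [sub_sub_cancel, log_div hy.ne' hx.ne'] at hlog
  rw [relPressure_eq hx hy, log_div hx.ne' hy.ne']
  calc (x - y) ^ 2 / (2 * x) = x * ((1 - y / x) + (1 - y / x) ^ 2 / 2) + y - x := by
        field_simp; ring
    _ ≤ x * (log x - log y) + y - x := by linarith [mul_le_mul_of_nonneg_left hlog hx.le]

/-- For `x, y > 0`, `P(x|y) ≥ (1/2) min{1/x, 1/y} (x - y)^2`. -/
theorem relPressure_lower_bound (x y : ℝ) (hx : 0 < x) (hy : 0 < y) :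
    relPressure x y ≥ (1 / 2) * min (1 / x) (1 / y) * (x - y) ^ 2 := by
  rcases le_total x y with hxy | hyx
  · rw [min_eq_right (one_div_le_one_div_of_le hx hxy)]
    exact (le_of_eq (by ring)).trans (sq_sub_div_le_relPressure_of_le hx hxy)
  · rw [min_eq_left (one_div_le_one_div_of_le hy hyx)]
    exact (le_of_eq (by ring)).trans (sq_sub_div_le_relPressure_of_ge hy hyx)
end

section
/- Let γ > 1 be a real number. For all real x, y with x > 0 and y > 0, the relative pressure satisfies the quadratic lower bound P̃(x|y) ≥ (γ/2)·min{x^{γ−2}, y^{γ−2}}·(x − y)². -/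
/-!
Up to the factor `1 / (γ - 1)`, `P̃(x|y)` is the gap between `t ^ γ` at `x` and its tangent
line at `y`. Between `x` and `y` the second derivative `γ (γ - 1) t ^ (γ - 2)` is at least
`γ (γ - 1) min {x ^ (γ - 2), y ^ (γ - 2)}`, since `t ^ (γ - 2)` is monotone. Subtracting half
of that constant times `(t - y) ^ 2` therefore leaves a convex function, which lies above its
tangent at `y`.
-/

open Real

/-- The relative pressure
`P̃(x|y) = (1/(γ-1))(x^γ - y^γ) + (γ/(γ-1))(y - x) y^(γ-1)` for a parameter `γ`. -/
noncomputable def relPressureP (γ x y : ℝ) : ℝ :=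
  (1 / (γ - 1)) * (x ^ γ - y ^ γ) + (γ / (γ - 1)) * (y - x) * y ^ (γ - 1)

open Set

theorem ConvexOn.add_mul_sub_le_of_hasDerivAt {S : Set ℝ} {g : ℝ → ℝ} {g' x y : ℝ}
    (hg : ConvexOn ℝ S g) (hx : x ∈ S) (hy : y ∈ S) (hg' : HasDerivAt g g' y) :
    g y + g' * (x - y) ≤ g x := by
  rcases lt_trichotomy x y with hxy | rfl | hxy
  · have := hg.slope_le_of_hasDerivAt hx hy hxy hg'
    rw [slope_def_field, div_le_iff₀ (sub_pos.2 hxy)] at this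
    linarith
  · simp
  · have := hg.le_slope_of_hasDerivAt hy hx hxy hg'
    rw [slope_def_field, le_div_iff₀ (sub_pos.2 hxy)] at this
    linarith

theorem add_deriv_mul_add_half_mul_sq_le {f f' f'' : ℝ → ℝ} {m x y : ℝ}
    (hf : ∀ s ∈ uIcc x y, HasDerivAt f (f' s) s)
    (hf' : ∀ s ∈ uIcc x y, HasDerivAt f' (f'' s) s)
    (hm : ∀ s ∈ uIcc x y, m ≤ f'' s) :
    f y + f' y * (x - y) + m / 2 * (x - y) ^ 2 ≤ f x := by
  set g : ℝ → ℝ := fun t ↦ f t - m / 2 * (t - y) ^ 2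
  have hg : ∀ s ∈ uIcc x y, HasDerivAt g (f' s - m * (s - y)) s := fun s hs ↦ by
    refine ((hf s hs).sub
      ((((hasDerivAt_id s).sub_const y).pow 2).const_mul (m / 2))).congr_deriv ?_
    simp only [id, Nat.cast_ofNat, mul_one]
    ring
  have hg' : ∀ s ∈ uIcc x y, HasDerivAt (fun t ↦ f' t - m * (t - y)) (f'' s - m) s :=
    fun s hs ↦
      (hf' s hs).sub ((((hasDerivAt_id s).sub_const y).const_mul m).congr_deriv (mul_one m))
  have hconv : ConvexOn ℝ (uIcc x y) g := by
    refine convexOn_of_hasDerivWithinAt2_nonneg (convex_uIcc x y)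
      (fun s hs ↦ (hg s hs).continuousAt.continuousWithinAt)
      (fun s hs ↦ (hg s (interior_subset hs)).hasDerivWithinAt)
      (fun s hs ↦ (hg' s (interior_subset hs)).hasDerivWithinAt)
      (fun s hs ↦ sub_nonneg.2 (hm s (interior_subset hs)))
  have := hconv.add_mul_sub_le_of_hasDerivAt left_mem_uIcc right_mem_uIcc
    (hg y right_mem_uIcc)
  simp only [g, sub_self] at this
  linarith

theorem min_rpow_le_rpow_of_mem_uIcc {x y s : ℝ} (p : ℝ) (hx : 0 < x) (hy : 0 < y)
    (hs : s ∈ uIcc x y) : min (x ^ p) (y ^ p) ≤ s ^ p := by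
  wlog hxy : x ≤ y generalizing x y
  · rw [min_comm]
    exact this hy hx (uIcc_comm x y ▸ hs) (le_of_not_ge hxy)
  rw [uIcc_of_le hxy] at hs
  rcases le_total 0 p with hp | hp
  · exact (min_le_left _ _).trans (rpow_le_rpow hx.le hs.1 hp)
  · exact (min_le_right _ _).trans (rpow_le_rpow_of_nonpos (hx.trans_le hs.1) hs.2 hp)

theorem relPressureP_eq (γ x y : ℝ) (hγ : γ ≠ 1) :
    relPressureP γ x y = (x ^ γ - (y ^ γ + γ * y ^ (γ - 1) * (x - y))) / (γ - 1) := by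
  have : γ - 1 ≠ 0 := sub_ne_zero.2 hγ
  unfold relPressureP
  field_simp
  ring

/-- For `γ > 1` and `x, y > 0`,
`P̃(x|y) ≥ (γ/2) min{x^(γ-2), y^(γ-2)} (x - y)^2`. -/
theorem relPressureP_lower_bound (γ : ℝ) (hγ : 1 < γ) (x y : ℝ)
    (hx : 0 < x) (hy : 0 < y) :
    relPressureP γ x y ≥ (γ / 2) * min (x ^ (γ - 2)) (y ^ (γ - 2)) * (x - y) ^ 2 := by
  have hγ1 : 0 < γ - 1 := sub_pos.2 hγ
  have hpos : ∀ s ∈ uIcc x y, 0 < s := fun s hs ↦ (lt_min hx hy).trans_le hs.1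
  have htangent := add_deriv_mul_add_half_mul_sq_le (f := fun t ↦ t ^ γ)
    (f' := fun t ↦ γ * t ^ (γ - 1)) (f'' := fun t ↦ γ * ((γ - 1) * t ^ (γ - 2)))
    (m := γ * ((γ - 1) * min (x ^ (γ - 2)) (y ^ (γ - 2))))
    (fun s hs ↦ hasDerivAt_rpow_const (Or.inl (hpos s hs).ne'))
    (fun s hs ↦ by
      refine ((hasDerivAt_rpow_const (Or.inl (hpos s hs).ne')).const_mul γ).congr_deriv ?_
      rw [sub_sub, one_add_one_eq_two])
    (fun s hs ↦ by
      have := min_rpow_le_rpow_of_mem_uIcc (γ - 2) hx hy hs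
      gcongr)
  rw [ge_iff_le, relPressureP_eq γ x y hγ.ne', le_div_iff₀ hγ1]
  linarith
end

section
/- Let γ > 1 and let 0 < y_min ≤ y_max be real numbers. Then there exists a constant C > 0, depending only on γ, y_min and y_max, such that for every real x > 0 and every real y with y_min ≤ y ≤ y_max the following holds: if y/2 ≤ x ≤ 2y then P̃(x|y) ≥ C·(x − y)², and if x < y/2 or x > 2y then P̃(x|y) ≥ C·(1 + x^γ). -/
open Real

/-!
With `u = x / y`, `P̃(x|y) = y^γ / (γ - 1) · (u^γ - 1 - γ (u - 1))`, the gap between `u^γ` and its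
tangent line at `u = 1`. On `[0, 2]` the gap is at least a multiple of `(u - 1)^2`, because the
secant slope of `t^(γ-1)` at `t = 1` is bounded below there, so the gap minus that quadratic has
derivative changing sign from `-` to `+` at `1`. For `u ≥ 2`, Bernoulli's inequality for
`(u/2)^γ` bounds the gap below by `(1 - (1 + γ)/2^γ) u^γ`. As `y` stays in a compact subinterval
of `(0, ∞)`, these bounds in `u` turn into the claimed bounds in `x`.
-/

open Set

theorem isMinOn_of_sub_mul_deriv_nonneg {f f' : ℝ → ℝ} {a b c : ℝ}
    (hf : ∀ t ∈ Icc a b, HasDerivAt f (f' t) t) (hf' : ∀ t ∈ Ioo a b, 0 ≤ (t - c) * f' t)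
    (hc : c ∈ Icc a b) : IsMinOn f (Icc a b) c := by
  intro x hx
  have hcont : ∀ {s}, s ⊆ Icc a b → ContinuousOn f s := fun hs t ht =>
    (hf t (hs ht)).continuousAt.continuousWithinAt
  have hderiv : ∀ {s}, s ⊆ Icc a b → ∀ t ∈ interior s, HasDerivWithinAt f (f' t) (interior s) t :=
    fun hs t ht => (hf t (hs (interior_subset ht))).hasDerivWithinAt
  rcases le_total x c with hxc | hcx
  · have hsub : Icc x c ⊆ Icc a b := Icc_subset_Icc hx.1 hc.2
    refine antitoneOn_of_hasDerivWithinAt_nonpos (convex_Icc x c) (hcont hsub) (hderiv hsub)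
      (fun t ht => ?_) ⟨le_rfl, hxc⟩ ⟨hxc, le_rfl⟩ hxc
    rw [interior_Icc] at ht
    have := hf' t ⟨hx.1.trans_lt ht.1, ht.2.trans_le hc.2⟩
    nlinarith [ht.2]
  · have hsub : Icc c x ⊆ Icc a b := Icc_subset_Icc hc.1 hx.2
    refine monotoneOn_of_hasDerivWithinAt_nonneg (convex_Icc c x) (hcont hsub) (hderiv hsub)
      (fun t ht => ?_) ⟨le_rfl, hcx⟩ ⟨hcx, le_rfl⟩ hcx
    rw [interior_Icc] at ht
    have := hf' t ⟨hc.1.trans_lt ht.1, ht.2.trans_le hx.2⟩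
    nlinarith [ht.1]

theorem mul_sq_le_rpow_sub_one_mul_sub_one {p t : ℝ} (hp : 0 < p) (ht₀ : 0 ≤ t) (ht₂ : t ≤ 2) :
    min p 1 / 2 * (t - 1) ^ 2 ≤ (t ^ p - 1) * (t - 1) := by
  have hmin₁ : min p 1 ≤ 1 := min_le_right p 1
  have hminp : min p 1 ≤ p := min_le_left p 1
  rcases le_total t 1 with ht₁ | ht₁ <;> rcases le_total p 1 with hp₁ | hp₁
  · have h := rpow_one_add_le_one_add_mul_self (s := t - 1) (by linarith) hp.le hp₁
    rw [add_sub_cancel] at h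
    nlinarith
  · have h : t ^ p ≤ t ^ (1 : ℝ) := rpow_le_rpow_of_exponent_ge' ht₀ ht₁ zero_le_one hp₁
    rw [rpow_one] at h
    nlinarith
  · -- `t = t ^ p * t ^ (1 - p)` and Bernoulli bounds the second factor by `1 + (1 - p)(t - 1)`
    have h := rpow_one_add_le_one_add_mul_self (s := t - 1) (by linarith) (p := 1 - p)
      (by linarith) (by linarith)
    rw [add_sub_cancel] at h
    have hsplit : t = t ^ p * t ^ (1 - p) := by
      rw [← rpow_add (by linarith), add_sub_cancel, rpow_one]
    have hge : 1 ≤ t ^ p := one_le_rpow ht₁ hp.le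
    have hlin : p * (t - 1) ≤ 2 * (t ^ p - 1) := by
      nlinarith [mul_le_mul_of_nonneg_left h (by linarith : (0:ℝ) ≤ t ^ p)]
    nlinarith
  · have h := self_le_rpow_of_one_le ht₁ hp₁
    nlinarith

noncomputable def rpowTangentGap (γ u : ℝ) : ℝ := u ^ γ - 1 - γ * (u - 1)

theorem relPressureP_eq_mul_rpowTangentGap {γ x y : ℝ} (hx : 0 ≤ x) (hy : 0 < y) :
    relPressureP γ x y = y ^ γ / (γ - 1) * rpowTangentGap γ (x / y) := by
  rw [relPressureP, rpowTangentGap, div_rpow hx hy.le, rpow_sub_one hy.ne']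
  field_simp
  ring

theorem mul_sq_le_rpowTangentGap {γ u : ℝ} (hγ : 1 < γ) (hu₀ : 0 ≤ u) (hu₂ : u ≤ 2) :
    γ * min (γ - 1) 1 / 4 * (u - 1) ^ 2 ≤ rpowTangentGap γ u := by
  set F : ℝ → ℝ := fun t => rpowTangentGap γ t - γ * min (γ - 1) 1 / 4 * (t - 1) ^ 2
  have hF : ∀ t, HasDerivAt F (γ * (t ^ (γ - 1) - 1) - γ * min (γ - 1) 1 / 2 * (t - 1)) t := by
    intro t
    have := (((hasDerivAt_rpow_const (p := γ) (Or.inr hγ.le)).sub_const 1).sub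
      (((hasDerivAt_id t).sub_const 1).const_mul γ)).sub
      ((((hasDerivAt_id t).sub_const 1).pow 2).const_mul (γ * min (γ - 1) 1 / 4))
    refine this.congr_deriv ?_
    simp only [id, Nat.cast_ofNat]
    ring
  have hmin : IsMinOn F (Icc 0 2) 1 := by
    refine isMinOn_of_sub_mul_deriv_nonneg (fun t _ => hF t) (fun t ht => ?_)
      ⟨zero_le_one, one_le_two⟩
    have := mul_sq_le_rpow_sub_one_mul_sub_one (sub_pos.2 hγ) ht.1.le ht.2.le
    nlinarith
  have := isMinOn_iff.1 hmin u ⟨hu₀, hu₂⟩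
  simp only [F, rpowTangentGap, one_rpow] at this ⊢
  linarith

theorem mul_rpow_le_rpowTangentGap {γ u : ℝ} (hγ : 1 ≤ γ) (hu : 2 ≤ u) :
    (1 - (1 + γ) / 2 ^ γ) * u ^ γ ≤ rpowTangentGap γ u := by
  have hbern := one_add_mul_self_le_rpow_one_add (s := u / 2 - 1) (by linarith) hγ
  rw [add_sub_cancel, div_rpow (by linarith) zero_le_two] at hbern
  have h2γ : 0 < (2 : ℝ) ^ γ := by positivity
  have hscaled : 1 + γ * (u - 1) ≤ (1 + γ) / 2 ^ γ * u ^ γ := calc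
    1 + γ * (u - 1) ≤ (1 + γ) * (1 + γ * (u / 2 - 1)) := by
      nlinarith [mul_nonneg (mul_nonneg (by linarith : (0:ℝ) ≤ γ) (sub_nonneg.2 hγ))
        (by linarith : (0:ℝ) ≤ u / 2 - 1)]
    _ ≤ (1 + γ) * (u ^ γ / 2 ^ γ) := by gcongr
    _ = (1 + γ) / 2 ^ γ * u ^ γ := by ring
  rw [rpowTangentGap]
  linarith

theorem one_add_lt_two_rpow {γ : ℝ} (hγ : 1 < γ) : 1 + γ < 2 ^ γ := by
  have := one_add_mul_self_lt_rpow_one_add (s := 1) (by norm_num) one_ne_zero hγ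
  norm_num at this
  linarith

section

variable {γ ymin ymax : ℝ}

theorem exists_mul_sq_le_relPressureP (hγ : 1 < γ) (hymin : 0 < ymin) (hle : ymin ≤ ymax) :
    ∃ C > 0, ∀ x y, 0 ≤ x → ymin ≤ y → y ≤ ymax → x ≤ 2 * y →
      C * (x - y) ^ 2 ≤ relPressureP γ x y := by
  set κ := γ * min (γ - 1) 1 / 4
  have hκ : 0 < κ := by have := lt_min (sub_pos.2 hγ) one_pos; positivity
  have hγ₁ : 0 < γ - 1 := sub_pos.2 hγ
  refine ⟨κ * ymin ^ γ / ((γ - 1) * ymax ^ 2), by have := hymin.trans_le hle; positivity,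
    fun x y hx hy₁ hy₂ hx₂ => ?_⟩
  have hy : 0 < y := hymin.trans_le hy₁
  have hgap := mul_sq_le_rpowTangentGap hγ (div_nonneg hx hy.le) ((div_le_iff₀ hy).2 hx₂)
  calc κ * ymin ^ γ / ((γ - 1) * ymax ^ 2) * (x - y) ^ 2
      ≤ κ * y ^ γ / ((γ - 1) * y ^ 2) * (x - y) ^ 2 := by gcongr
    _ = y ^ γ / (γ - 1) * (κ * (x / y - 1) ^ 2) := by field_simp
    _ ≤ relPressureP γ x y := by
      rw [relPressureP_eq_mul_rpowTangentGap hx hy]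
      exact mul_le_mul_of_nonneg_left hgap (by positivity)

theorem exists_mul_one_add_rpow_le_relPressureP_of_lt_half (hγ : 1 < γ) (hymin : 0 < ymin)
    (hle : ymin ≤ ymax) :
    ∃ C > 0, ∀ x y, 0 ≤ x → ymin ≤ y → y ≤ ymax → x < y / 2 →
      C * (1 + x ^ γ) ≤ relPressureP γ x y := by
  set κ := γ * min (γ - 1) 1 / 4
  have hκ : 0 < κ := by have := lt_min (sub_pos.2 hγ) one_pos; positivity
  have hγ₁ : 0 < γ - 1 := sub_pos.2 hγ
  have hymax : 0 < ymax := hymin.trans_le hle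
  refine ⟨ymin ^ γ / (γ - 1) * (κ / 4) / (1 + ymax ^ γ), by positivity,
    fun x y hx hy₁ hy₂ hxy => ?_⟩
  have hy : 0 < y := hymin.trans_le hy₁
  have hu : x / y < 1 / 2 := by rw [div_lt_iff₀ hy]; linarith
  have hgap := mul_sq_le_rpowTangentGap hγ (div_nonneg hx hy.le) (by linarith)
  have hxγ : x ^ γ ≤ ymax ^ γ := rpow_le_rpow hx (by linarith) (by linarith)
  have hsq : 1 / 4 ≤ (x / y - 1) ^ 2 := by nlinarith
  calc ymin ^ γ / (γ - 1) * (κ / 4) / (1 + ymax ^ γ) * (1 + x ^ γ)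
      ≤ ymin ^ γ / (γ - 1) * (κ / 4) := by
        rw [div_mul_eq_mul_div, div_le_iff₀ (by positivity)]
        gcongr
    _ ≤ y ^ γ / (γ - 1) * (κ * (x / y - 1) ^ 2) := by
        gcongr
        linarith [mul_le_mul_of_nonneg_left hsq hκ.le]
    _ ≤ relPressureP γ x y := by
      rw [relPressureP_eq_mul_rpowTangentGap hx hy]
      exact mul_le_mul_of_nonneg_left hgap (by positivity)

theorem exists_mul_one_add_rpow_le_relPressureP_of_two_mul_lt (hγ : 1 < γ) (hymin : 0 < ymin) :
    ∃ C > 0, ∀ x y, ymin ≤ y → 2 * y < x → C * (1 + x ^ γ) ≤ relPressureP γ x y := by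
  set c := (1 - (1 + γ) / 2 ^ γ) / (γ - 1)
  have hc : 0 < c := by
    have := one_add_lt_two_rpow hγ
    have : (1 + γ) / 2 ^ γ < 1 := (div_lt_one (by positivity)).2 this
    have := sub_pos.2 hγ
    positivity
  refine ⟨c / (1 + ((2 * ymin) ^ γ)⁻¹), by positivity, fun x y hy₁ hxy => ?_⟩
  have hy : 0 < y := hymin.trans_le hy₁
  have hx : 0 < x := by linarith
  have hgap := mul_rpow_le_rpowTangentGap hγ.le ((le_div_iff₀ hy).2 hxy.le)
  have hxγ : (2 * ymin) ^ γ ≤ x ^ γ := rpow_le_rpow (by positivity) (by linarith) (by linarith)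
  have hone : 1 + x ^ γ ≤ (1 + ((2 * ymin) ^ γ)⁻¹) * x ^ γ := by
    have : 1 ≤ ((2 * ymin) ^ γ)⁻¹ * x ^ γ := by
      rw [inv_mul_eq_div, one_le_div (by positivity)]; exact hxγ
    linarith
  calc c / (1 + ((2 * ymin) ^ γ)⁻¹) * (1 + x ^ γ) ≤ c * x ^ γ := by
        rw [div_mul_eq_mul_div, div_le_iff₀ (by positivity)]
        nlinarith
    _ = y ^ γ / (γ - 1) * ((1 - (1 + γ) / 2 ^ γ) * (x / y) ^ γ) := by
        rw [div_rpow hx.le hy.le]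
        simp only [c]
        field_simp
    _ ≤ relPressureP γ x y := by
      rw [relPressureP_eq_mul_rpowTangentGap hx.le hy]
      exact mul_le_mul_of_nonneg_left hgap (by positivity)

end

/-- For `γ > 1` and `0 < y_min ≤ y_max` there is a constant `C = C(γ, y_min, y_max) > 0`
such that for all `x > 0` and `y ∈ [y_min, y_max]`:
if `y/2 ≤ x ≤ 2y` then `P̃(x|y) ≥ C (x - y)^2`, and
if `x < y/2` or `x > 2y` then `P̃(x|y) ≥ C (1 + x^γ)`. -/
theorem relPressureP_dichotomy_lower_bound (γ : ℝ) (hγ : 1 < γ)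
    (ymin ymax : ℝ) (hymin : 0 < ymin) (hle : ymin ≤ ymax) :
    ∃ C > (0:ℝ), ∀ x y : ℝ, 0 < x → ymin ≤ y → y ≤ ymax →
      ((y / 2 ≤ x ∧ x ≤ 2 * y → relPressureP γ x y ≥ C * (x - y) ^ 2) ∧
       (x < y / 2 ∨ 2 * y < x → relPressureP γ x y ≥ C * (1 + x ^ γ))) := by
  obtain ⟨C₁, hC₁, hnear⟩ := exists_mul_sq_le_relPressureP hγ hymin hle
  obtain ⟨C₂, hC₂, hbelow⟩ := exists_mul_one_add_rpow_le_relPressureP_of_lt_half hγ hymin hle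
  obtain ⟨C₃, hC₃, habove⟩ := exists_mul_one_add_rpow_le_relPressureP_of_two_mul_lt hγ hymin
  refine ⟨min C₁ (min C₂ C₃), by positivity, fun x y hx hy₁ hy₂ => ⟨?_, ?_⟩⟩
  · rintro ⟨-, hx₂⟩
    refine le_trans ?_ (hnear x y hx.le hy₁ hy₂ hx₂)
    gcongr
    exact min_le_left _ _
  · rintro (hsmall | hlarge)
    · refine le_trans ?_ (hbelow x y hx.le hy₁ hy₂ hsmall)
      gcongr
      exact (min_le_right _ _).trans (min_le_left _ _)
    · refine le_trans ?_ (habove x y hy₁ hlarge)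
      gcongr
      exact (min_le_right _ _).trans (min_le_right _ _)
end

section
/- Let γ > 1 be real, let ρ, ρ̄, n, n̄ be positive reals, and let m, m̄, w, w̄ ∈ ℝ³. Set u = m/ρ, ū = m̄/ρ̄, v = w/n, v̄ = w̄/n̄, and define the entropy E(ρ, m, n, w) := ‖m‖²/(2ρ) + ‖w‖²/(2n) + ρ·log ρ + n^γ/(γ−1). Then E(ρ̄, m̄, n̄, w̄) − E(ρ, m, n, w) − [ (1 + log ρ − ‖u‖²/2)·(ρ̄ − ρ) + ⟨u, m̄ − m⟩ + ((γ/(γ−1))·n^{γ−1} − ‖v‖²/2)·(n̄ − n) + ⟨v, w̄ − w⟩ ] = (ρ̄/2)·‖ū − u‖² + (n̄/2)·‖v̄ − v‖² + P(ρ̄|ρ) + P̃(n̄|n). -/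
open Real
open scoped RealInnerProductSpace

/-- The macroscopic entropy `E(ρ, m, n, w) = ‖m‖²/(2ρ) + ‖w‖²/(2n) + ρ log ρ + n^γ/(γ-1)`. -/
noncomputable def entropyE (γ ρ n : ℝ) (m w : EuclideanSpace ℝ (Fin 3)) : ℝ :=
  ‖m‖ ^ 2 / (2 * ρ) + ‖w‖ ^ 2 / (2 * n) + ρ * Real.log ρ + n ^ γ / (γ - 1)

/-!
The bracket is the derivative of `E`, so the left-hand side is the Bregman divergence of `E`,
which is additive over the four summands of `E`. The divergences of `ρ log ρ` and
`n^γ/(γ-1)` are `P` and `P̃`, and for the kinetic energy `‖m‖²/(2ρ)`, written in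
terms of `ρ` and `u = m/ρ`, completing the square gives `(ρ̄/2)‖ū - u‖²`.
-/

theorem kinetic_bregman_eq {E : Type*} [NormedAddCommGroup E] [InnerProductSpace ℝ E]
    {ρ ρ' : ℝ} (hρ : ρ ≠ 0) (hρ' : ρ' ≠ 0) (m m' : E) :
    ‖m'‖ ^ 2 / (2 * ρ') - ‖m‖ ^ 2 / (2 * ρ) -
        (-(‖ρ⁻¹ • m‖ ^ 2 / 2) * (ρ' - ρ) + ⟪ρ⁻¹ • m, m' - m⟫) =
      ρ' / 2 * ‖ρ'⁻¹ • m' - ρ⁻¹ • m‖ ^ 2 := by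
  obtain ⟨u, rfl⟩ : ∃ u : E, m = ρ • u := ⟨ρ⁻¹ • m, (smul_inv_smul₀ hρ m).symm⟩
  obtain ⟨u', rfl⟩ : ∃ u' : E, m' = ρ' • u' := ⟨ρ'⁻¹ • m', (smul_inv_smul₀ hρ' m').symm⟩
  simp only [inv_smul_smul₀ hρ, inv_smul_smul₀ hρ', norm_smul, mul_pow, Real.norm_eq_abs,
    sq_abs, inner_sub_right, real_inner_smul_right, real_inner_self_eq_norm_sq,
    norm_sub_sq_real, real_inner_comm u u']
  field_simp
  ring

theorem relPressure_eq_bregman (x y : ℝ) :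
    relPressure x y = x * Real.log x - y * Real.log y - (1 + Real.log y) * (x - y) := by
  unfold relPressure
  ring

theorem relPressureP_eq_bregman (γ x y : ℝ) :
    relPressureP γ x y =
      x ^ γ / (γ - 1) - y ^ γ / (γ - 1) - γ / (γ - 1) * y ^ (γ - 1) * (x - y) := by
  unfold relPressureP
  ring

theorem relative_entropy_identity_general (γ : ℝ)
    (ρ ρ' n n' : ℝ) (hρ : 0 < ρ) (hρ' : 0 < ρ') (hn : 0 < n) (hn' : 0 < n')
    (m m' w w' : EuclideanSpace ℝ (Fin 3))
    (u u' v v' : EuclideanSpace ℝ (Fin 3))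
    (hu : u = ρ⁻¹ • m) (hu' : u' = ρ'⁻¹ • m')
    (hv : v = n⁻¹ • w) (hv' : v' = n'⁻¹ • w') :
    entropyE γ ρ' n' m' w' - entropyE γ ρ n m w -
      ((1 + Real.log ρ - ‖u‖ ^ 2 / 2) * (ρ' - ρ) + ⟪u, m' - m⟫ +
        ((γ / (γ - 1)) * n ^ (γ - 1) - ‖v‖ ^ 2 / 2) * (n' - n) + ⟪v, w' - w⟫) =
    (ρ' / 2) * ‖u' - u‖ ^ 2 + (n' / 2) * ‖v' - v‖ ^ 2 +
      relPressure ρ' ρ + relPressureP γ n' n := by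
  subst hu hu' hv hv'
  unfold entropyE
  linear_combination kinetic_bregman_eq hρ.ne' hρ'.ne' m m' +
    kinetic_bregman_eq hn.ne' hn'.ne' w w' - relPressure_eq_bregman ρ' ρ -
    relPressureP_eq_bregman γ n' n

/-- The relative entropy `E(Ū) - E(U) - DE(U)(Ū - U)` equals
`(ρ̄/2)‖ū - u‖² + (n̄/2)‖v̄ - v‖² + P(ρ̄|ρ) + P̃(n̄|n)`. -/
theorem relative_entropy_identity (γ : ℝ) (hγ : 1 < γ)
    (ρ ρ' n n' : ℝ) (hρ : 0 < ρ) (hρ' : 0 < ρ') (hn : 0 < n) (hn' : 0 < n')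
    (m m' w w' : EuclideanSpace ℝ (Fin 3))
    (u u' v v' : EuclideanSpace ℝ (Fin 3))
    (hu : u = ρ⁻¹ • m) (hu' : u' = ρ'⁻¹ • m')
    (hv : v = n⁻¹ • w) (hv' : v' = n'⁻¹ • w') :
    entropyE γ ρ' n' m' w' - entropyE γ ρ n m w -
      ((1 + Real.log ρ - ‖u‖ ^ 2 / 2) * (ρ' - ρ) + ⟪u, m' - m⟫ +
        ((γ / (γ - 1)) * n ^ (γ - 1) - ‖v‖ ^ 2 / 2) * (n' - n) + ⟪v, w' - w⟫) =
    (ρ' / 2) * ‖u' - u‖ ^ 2 + (n' / 2) * ‖v' - v‖ ^ 2 +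
      relPressure ρ' ρ + relPressureP γ n' n :=
  relative_entropy_identity_general γ ρ ρ' n n' hρ hρ' hn hn' m m' w w' u u' v v' hu hu' hv hv'
end

section
/- Let Ω ⊂ ℝ³ be a bounded measurable set and let δ > 0. Then there exists a constant C > 0, depending only on δ and Ω, such that for every measurable function f : Ω × ℝ³ → [0, ∞) with ∫_{Ω×ℝ³} ‖ξ‖²·f(x, ξ) dx dξ < ∞, one has ∫_{Ω×ℝ³} f·log⁻ f dx dξ ≤ C + δ·∫_{Ω×ℝ³} ‖ξ‖²·f dx dξ. -/
open MeasureTheory Real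
open scoped ENNReal

/-! Split pointwise according to whether `f ≥ e^{-a}` with `a = δ‖ξ‖²`: there `log⁻ f ≤ a`, so
`f log⁻ f ≤ δ‖ξ‖² f`; otherwise `f log⁻ f ≤ 2√f ≤ 2 e^{-δ‖ξ‖²/2}`, a Gaussian in `ξ` alone, whose
integral over `Ω × ℝ³` is finite because `Ω` has finite measure. -/

lemma mul_neg_log_le_two_mul_sqrt {t : ℝ} (ht : 0 ≤ t) : t * -log t ≤ 2 * √t := by
  rcases ht.eq_or_lt with rfl | ht
  · simp
  have hlog : -log t ≤ 2 * (√t)⁻¹ := by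
    have := log_le_sub_one_of_pos (inv_pos.2 (sqrt_pos.2 ht))
    rw [log_inv, log_sqrt ht.le] at this
    linarith
  calc t * -log t ≤ t * (2 * (√t)⁻¹) := mul_le_mul_of_nonneg_left hlog ht.le
    _ = 2 * √t := by rw [mul_left_comm, ← div_eq_mul_inv, div_sqrt]

lemma mul_max_zero_neg_log_le {t a : ℝ} (ht : 0 ≤ t) (ha : 0 ≤ a) :
    t * max 0 (-log t) ≤ a * t + 2 * exp (-a / 2) := by
  have hexp := exp_pos (-a / 2)
  rcases le_or_gt (exp (-a)) t with hlarge | hsmall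
  · have hlog : -log t ≤ a := by
      have := log_le_log (exp_pos _) hlarge
      rw [log_exp] at this
      linarith
    have := mul_le_mul_of_nonneg_left (max_le ha hlog) ht
    linarith
  · have hsqrt : √t ≤ exp (-a / 2) := by
      rw [exp_half]
      exact sqrt_le_sqrt hsmall.le
    calc t * max 0 (-log t) = max 0 (t * -log t) := by rw [mul_max_of_nonneg _ _ ht, mul_zero]
      _ ≤ 2 * √t := max_le (by positivity) (mul_neg_log_le_two_mul_sqrt ht)
      _ ≤ a * t + 2 * exp (-a / 2) := by nlinarith

theorem lintegral_mul_max_zero_neg_log_le {α : Type*} [MeasurableSpace α] (μ : Measure α)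
    {f a : α → ℝ} (hf : ∀ x, 0 ≤ f x) (ha : ∀ x, 0 ≤ a x) (ha_meas : Measurable a) :
    ∫⁻ x, ENNReal.ofReal (f x * max 0 (-log (f x))) ∂μ ≤
      ∫⁻ x, ENNReal.ofReal (a x * f x) ∂μ + ∫⁻ x, ENNReal.ofReal (2 * exp (-a x / 2)) ∂μ := by
  rw [← lintegral_add_right _ (by fun_prop)]
  refine lintegral_mono fun x => ?_
  rw [← ENNReal.ofReal_add (mul_nonneg (ha x) (hf x)) (by positivity)]
  exact ENNReal.ofReal_le_ofReal (mul_max_zero_neg_log_le (hf x) (ha x))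

theorem integrable_exp_neg_mul_sq_norm {V : Type*} [NormedAddCommGroup V]
    [InnerProductSpace ℝ V] [FiniteDimensional ℝ V] [MeasurableSpace V] [BorelSpace V]
    {b : ℝ} (hb : 0 < b) : Integrable fun v : V => exp (-b * ‖v‖ ^ 2) :=
  Integrable.of_integral_ne_zero <| by
    rw [GaussianFourier.integral_rexp_neg_mul_sq_norm hb]
    positivity

theorem setLIntegral_prod_univ_comp_snd {α β : Type*} [MeasurableSpace α] [MeasurableSpace β]
    {μ : Measure α} {ν : Measure β} [SFinite μ] [SFinite ν] (s : Set α) {g : β → ℝ≥0∞}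
    (hg : Measurable g) :
    ∫⁻ p in s ×ˢ Set.univ, g p.2 ∂μ.prod ν = μ s * ∫⁻ y, g y ∂ν := by
  rw [setLIntegral_prod _ (by fun_prop), Measure.restrict_univ]
  exact (setLIntegral_const s (∫⁻ y, g y ∂ν)).trans (mul_comm _ _)

theorem integral_mul_log_neg_le_general (Ω : Set (EuclideanSpace ℝ (Fin 3)))
    (hΩbdd : Bornology.IsBounded Ω)
    (δ : ℝ) (hδ : 0 < δ) :
    ∃ C > (0:ℝ),
      ∀ f : EuclideanSpace ℝ (Fin 3) × EuclideanSpace ℝ (Fin 3) → ℝ,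
        Measurable f → (∀ p, 0 ≤ f p) →
        (∫⁻ p in Ω ×ˢ Set.univ, ENNReal.ofReal (‖p.2‖ ^ 2 * f p) < ∞) →
        ∫⁻ p in Ω ×ˢ Set.univ, ENNReal.ofReal (f p * max 0 (-Real.log (f p))) ≤
          ENNReal.ofReal C +
            ENNReal.ofReal δ * ∫⁻ p in Ω ×ˢ Set.univ, ENNReal.ofReal (‖p.2‖ ^ 2 * f p) := by
  set I := ∫⁻ ξ : EuclideanSpace ℝ (Fin 3), ENNReal.ofReal (2 * exp (-(δ * ‖ξ‖ ^ 2) / 2))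
  have hI : I < ∞ := by
    have hgauss := (integrable_exp_neg_mul_sq_norm
      (V := EuclideanSpace ℝ (Fin 3)) (half_pos hδ)).const_mul 2
    convert hgauss.lintegral_lt_top using 6 with ξ
    ring
  have hΩI : volume Ω * I ≠ ∞ := ENNReal.mul_ne_top hΩbdd.measure_lt_top.ne hI.ne
  refine ⟨(volume Ω * I).toReal + 1, by positivity, fun f _ hf _ => ?_⟩
  calc _ ≤ (∫⁻ p in Ω ×ˢ Set.univ, ENNReal.ofReal (δ * ‖p.2‖ ^ 2 * f p)) +
        ∫⁻ p in Ω ×ˢ Set.univ, ENNReal.ofReal (2 * exp (-(δ * ‖p.2‖ ^ 2) / 2)) :=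
        lintegral_mul_max_zero_neg_log_le _ hf (fun p => by positivity) (by fun_prop)
    _ = ENNReal.ofReal δ * (∫⁻ p in Ω ×ˢ Set.univ, ENNReal.ofReal (‖p.2‖ ^ 2 * f p)) +
        volume Ω * I := by
      simp_rw [mul_assoc δ, ENNReal.ofReal_mul hδ.le]
      rw [lintegral_const_mul' _ _ ENNReal.ofReal_ne_top, Measure.volume_eq_prod,
        setLIntegral_prod_univ_comp_snd
          (g := fun ξ => ENNReal.ofReal (2 * exp (-(δ * ‖ξ‖ ^ 2) / 2))) _ (by fun_prop)]
    _ ≤ _ := by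
      rw [add_comm]
      gcongr
      exact (ENNReal.le_ofReal_iff_toReal_le hΩI (by positivity)).2 (by linarith)

/-- For a bounded measurable `Ω ⊂ ℝ³` and `δ > 0` there is `C = C(δ, Ω) > 0` such that
for every measurable `f : Ω × ℝ³ → [0, ∞)` with finite second velocity moment,
`∫ f log⁻ f ≤ C + δ ∫ ‖ξ‖² f`, where `log⁻ f = max {0, -log f}`. -/
theorem integral_mul_log_neg_le (Ω : Set (EuclideanSpace ℝ (Fin 3)))
    (hΩmeas : MeasurableSet Ω) (hΩbdd : Bornology.IsBounded Ω)
    (δ : ℝ) (hδ : 0 < δ) :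
    ∃ C > (0:ℝ),
      ∀ f : EuclideanSpace ℝ (Fin 3) × EuclideanSpace ℝ (Fin 3) → ℝ,
        Measurable f → (∀ p, 0 ≤ f p) →
        (∫⁻ p in Ω ×ˢ Set.univ, ENNReal.ofReal (‖p.2‖ ^ 2 * f p) < ∞) →
        ∫⁻ p in Ω ×ˢ Set.univ, ENNReal.ofReal (f p * max 0 (-Real.log (f p))) ≤
          ENNReal.ofReal C +
            ENNReal.ofReal δ * ∫⁻ p in Ω ×ˢ Set.univ, ENNReal.ofReal (‖p.2‖ ^ 2 * f p) :=
  integral_mul_log_neg_le_general Ω hΩbdd δ hδ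
end

section
/- Let r > 0 and let p be a real number with 1 < p < (r + 3)/4. Then there exists a constant C > 0, depending only on r and p, such that for every M > 0 and every measurable function f : ℝ³ → ℝ with 0 ≤ f(ξ) ≤ M for almost every ξ, one has ( ∫_{ℝ³} ‖ξ‖·f(ξ) dξ )^p ≤ C · M^{p−1} · ∫_{ℝ³} (1 + ‖ξ‖)^r · f(ξ) dξ. -/
/-!
Split space at a radius `s`. On the ball `‖ξ‖ f ≤ M s`, which contributes `M s ^ (d + 1) |B₁|`;
outside it `‖ξ‖ ≤ s ^ (1 - r) (1 + ‖ξ‖) ^ r`, which contributes `s ^ (1 - r) A` with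
`A = ∫ (1 + ‖ξ‖) ^ r f`. The radius with `M s ^ (r + d) = A` balances the two terms, and when
`A ≥ M` this `s` is at least `1`, so `(d + 1) p ≤ r + d` gives
`(M s ^ (d + 1)) ^ p ≤ M ^ (p - 1) A`. When `A ≤ M` the trivial bound `∫ ‖ξ‖ f ≤ A` suffices.
-/

open MeasureTheory Real
open scoped ENNReal
open Metric Module

lemma le_rpow_one_sub_mul_one_add_rpow {a r s : ℝ} (ha : 0 ≤ a) (hr : 1 ≤ r) (hs : 0 < s)
    (hsa : s ≤ 1 + a) : a ≤ s ^ (1 - r) * (1 + a) ^ r :=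
  calc a ≤ 1 + a := by linarith
    _ = (1 + a) ^ (1 - r) * (1 + a) ^ r := by
        rw [← Real.rpow_add (by linarith : 0 < 1 + a), sub_add_cancel, Real.rpow_one]
    _ ≤ s ^ (1 - r) * (1 + a) ^ r :=
        mul_le_mul_of_nonneg_right (Real.rpow_le_rpow_of_nonpos hs hsa (by linarith))
          (by positivity)

lemma le_one_add_rpow {a r : ℝ} (ha : 0 ≤ a) (hr : 1 ≤ r) : a ≤ (1 + a) ^ r := by
  simpa using le_rpow_one_sub_mul_one_add_rpow ha hr one_pos (by linarith)

lemma mul_pow_succ_rpow_le {M s r p : ℝ} {d : ℕ} (hM : 0 < M) (hs : 1 ≤ s)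
    (hpr : (d + 1) * p ≤ r + d) : (M * s ^ (d + 1)) ^ p ≤ M ^ (p - 1) * (M * s ^ (r + d)) := by
  have hs0 : 0 < s := by linarith
  calc (M * s ^ (d + 1)) ^ p = M ^ p * s ^ ((d + 1) * p) := by
        rw [Real.mul_rpow hM.le (by positivity), ← Real.rpow_natCast, ← Real.rpow_mul hs0.le]
        push_cast; ring
    _ ≤ M ^ p * s ^ (r + d) := by gcongr
    _ = M ^ (p - 1) * (M * s ^ (r + d)) := by
        rw [← mul_assoc, ← Real.rpow_add_one hM.ne', sub_add_cancel]

namespace ENNReal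

lemma rpow_le_ofReal_rpow_sub_one_mul {I A : ℝ≥0∞} {M p : ℝ} (hM : 0 ≤ M) (hp : 1 ≤ p)
    (hIA : I ≤ A) (hAM : A ≤ ENNReal.ofReal M) : I ^ p ≤ ENNReal.ofReal (M ^ (p - 1)) * A :=
  calc I ^ p ≤ A ^ p := rpow_le_rpow hIA (by linarith)
    _ = A ^ (p - 1) * A ^ (1 : ℝ) := by
        rw [← rpow_add_of_nonneg _ _ (by linarith) zero_le_one, sub_add_cancel]
    _ ≤ ENNReal.ofReal (M ^ (p - 1)) * A := by
        rw [rpow_one, ← ofReal_rpow_of_nonneg hM (by linarith)]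
        gcongr

lemma rpow_le_of_forall_pos_le_add {I A V : ℝ≥0∞} {M r p : ℝ} {d : ℕ} (hM : 0 < M) (hp : 1 ≤ p)
    (hpr : (d + 1) * p ≤ r + d) (hA : A ≠ ⊤) (hMA : ENNReal.ofReal M < A)
    (hI : ∀ s > 0, I ≤ ENNReal.ofReal (M * s ^ (d + 1)) * V + ENNReal.ofReal (s ^ (1 - r)) * A) :
    I ^ p ≤ (V + 1) ^ p * ENNReal.ofReal (M ^ (p - 1)) * A := by
  set a := A.toReal
  have hAa : A = ENNReal.ofReal a := (ofReal_toReal hA).symm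
  have hMa : M ≤ a := by
    rw [hAa] at hMA; exact ((ofReal_lt_ofReal_iff_of_nonneg hM.le).mp hMA).le
  have hrd : 0 < r + d := by nlinarith
  -- `s` balances the two terms of `hI`: `s ^ (1 - r) * a = M * s ^ (d + 1)`.
  set s := (a / M) ^ (r + d)⁻¹
  have hs : 1 ≤ s := Real.one_le_rpow ((one_le_div hM).mpr hMa) (by positivity)
  have hsa : M * s ^ (r + d) = a := by
    rw [← Real.rpow_mul (by positivity), inv_mul_cancel₀ hrd.ne', Real.rpow_one]
    field_simp
  have hIs : I ≤ ENNReal.ofReal (M * s ^ (d + 1)) * (V + 1) := calc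
    I ≤ ENNReal.ofReal (M * s ^ (d + 1)) * V + ENNReal.ofReal (s ^ (1 - r)) * A :=
        hI s (by positivity)
    _ = _ := by
        rw [hAa, ← hsa, ← ofReal_mul (by positivity), mul_add, mul_one, mul_left_comm,
          ← Real.rpow_add (by positivity), ← Real.rpow_natCast]
        push_cast; ring_nf
  calc I ^ p ≤ (ENNReal.ofReal (M * s ^ (d + 1)) * (V + 1)) ^ p :=
        rpow_le_rpow hIs (by linarith)
    _ = ENNReal.ofReal ((M * s ^ (d + 1)) ^ p) * (V + 1) ^ p := by
        rw [mul_rpow_of_nonneg _ _ (by linarith),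
          ofReal_rpow_of_nonneg (by positivity) (by linarith)]
    _ ≤ ENNReal.ofReal (M ^ (p - 1) * (M * s ^ (r + d))) * (V + 1) ^ p := by
        gcongr
        exact mul_pow_succ_rpow_le hM hs hpr
    _ = _ := by
        rw [hsa, ofReal_mul (by positivity), hAa]
        ring

end ENNReal

lemma ofReal_norm_mul_le_indicator_add {E : Type*} [SeminormedAddCommGroup E] {x : E}
    {y M r s : ℝ} (hy : 0 ≤ y) (hyM : y ≤ M) (hr : 1 ≤ r) (hs : 0 < s) :
    ENNReal.ofReal (‖x‖ * y) ≤ (ball (0 : E) s).indicator (fun _ ↦ ENNReal.ofReal (M * s)) x +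
      ENNReal.ofReal (s ^ (1 - r)) * ENNReal.ofReal ((1 + ‖x‖) ^ r * y) := by
  by_cases hx : x ∈ ball (0 : E) s
  · rw [Set.indicator_of_mem hx]
    refine le_add_right (ENNReal.ofReal_le_ofReal ?_)
    rw [mem_ball_zero_iff] at hx
    exact (mul_le_mul hx.le hyM hy hs.le).trans_eq (mul_comm s M)
  · rw [Set.indicator_of_notMem hx, zero_add, ← ENNReal.ofReal_mul (by positivity), ← mul_assoc]
    rw [mem_ball_zero_iff, not_lt] at hx
    refine ENNReal.ofReal_le_ofReal (mul_le_mul_of_nonneg_right ?_ hy)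
    exact le_rpow_one_sub_mul_one_add_rpow (norm_nonneg x) hr hs (by linarith)

section HaarMeasure

variable {E : Type*} [NormedAddCommGroup E] [NormedSpace ℝ E] [MeasurableSpace E] [BorelSpace E]
  [FiniteDimensional ℝ E] (μ : Measure E) [μ.IsAddHaarMeasure]

lemma lintegral_norm_mul_le_add {f : E → ℝ} {M r s : ℝ} (hf : ∀ᵐ x ∂μ, 0 ≤ f x ∧ f x ≤ M)
    (hr : 1 ≤ r) (hs : 0 < s) :
    ∫⁻ x, ENNReal.ofReal (‖x‖ * f x) ∂μ ≤
      ENNReal.ofReal (M * s ^ (finrank ℝ E + 1)) * μ (ball 0 1) +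
        ENNReal.ofReal (s ^ (1 - r)) * ∫⁻ x, ENNReal.ofReal ((1 + ‖x‖) ^ r * f x) ∂μ :=
  calc ∫⁻ x, ENNReal.ofReal (‖x‖ * f x) ∂μ
      ≤ ∫⁻ x, (ball (0 : E) s).indicator (fun _ ↦ ENNReal.ofReal (M * s)) x +
          ENNReal.ofReal (s ^ (1 - r)) * ENNReal.ofReal ((1 + ‖x‖) ^ r * f x) ∂μ :=
        lintegral_mono_ae <| hf.mono fun x hx ↦ ofReal_norm_mul_le_indicator_add hx.1 hx.2 hr hs
    _ = ENNReal.ofReal (M * s) * μ (ball 0 s) +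
          ENNReal.ofReal (s ^ (1 - r)) * ∫⁻ x, ENNReal.ofReal ((1 + ‖x‖) ^ r * f x) ∂μ := by
        rw [lintegral_add_left (measurable_const.indicator measurableSet_ball),
          lintegral_indicator_const measurableSet_ball,
          lintegral_const_mul' _ _ ENNReal.ofReal_ne_top]
    _ = _ := by
        rw [Measure.addHaar_ball_of_pos μ _ hs, ← mul_assoc, ← ENNReal.ofReal_mul' (by positivity),
          pow_succ', ← mul_assoc]

theorem lintegral_norm_mul_rpow_le {f : E → ℝ} {M r p : ℝ} (hM : 0 < M) (hp : 1 ≤ p)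
    (hpr : (finrank ℝ E + 1) * p ≤ r + finrank ℝ E) (hf : ∀ᵐ x ∂μ, 0 ≤ f x ∧ f x ≤ M) :
    (∫⁻ x, ENNReal.ofReal (‖x‖ * f x) ∂μ) ^ p ≤
      (μ (ball 0 1) + 1) ^ p * ENNReal.ofReal (M ^ (p - 1)) *
        ∫⁻ x, ENNReal.ofReal ((1 + ‖x‖) ^ r * f x) ∂μ := by
  set I := ∫⁻ x, ENNReal.ofReal (‖x‖ * f x) ∂μ
  set A := ∫⁻ x, ENNReal.ofReal ((1 + ‖x‖) ^ r * f x) ∂μ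
  have hr : 1 ≤ r := by nlinarith
  have hV : 1 ≤ (μ (ball 0 1) + 1) ^ p := ENNReal.one_le_rpow le_add_self (by linarith)
  rcases eq_or_ne A ⊤ with hA | hA
  · rw [hA, ENNReal.mul_top]
    · exact le_top
    · exact mul_ne_zero (by positivity) (by simpa using Real.rpow_pos_of_pos hM _)
  rcases le_or_gt A (ENNReal.ofReal M) with hAM | hMA
  · have hIA : I ≤ A := lintegral_mono_ae <| hf.mono fun x hx ↦ ENNReal.ofReal_le_ofReal <|
      mul_le_mul_of_nonneg_right (le_one_add_rpow (norm_nonneg x) hr) hx.1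
    calc I ^ p ≤ ENNReal.ofReal (M ^ (p - 1)) * A :=
          ENNReal.rpow_le_ofReal_rpow_sub_one_mul hM.le hp hIA hAM
      _ ≤ _ := by rw [mul_assoc]; exact le_mul_of_one_le_left' hV
  exact ENNReal.rpow_le_of_forall_pos_le_add hM hp hpr hA hMA fun s hs ↦
    lintegral_norm_mul_le_add μ hf hr hs

end HaarMeasure

theorem momentum_moment_bound_general (r p : ℝ) (hp1 : 1 < p) (hp2 : p < (r + 3) / 4) :
    ∃ C > (0:ℝ), ∀ M : ℝ, 0 < M → ∀ f : EuclideanSpace ℝ (Fin 3) → ℝ,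
      Measurable f → (∀ᵐ ξ, 0 ≤ f ξ ∧ f ξ ≤ M) →
      (∫⁻ ξ, ENNReal.ofReal (‖ξ‖ * f ξ)) ^ p ≤
        ENNReal.ofReal C * ENNReal.ofReal (M ^ (p - 1)) *
          ∫⁻ ξ, ENNReal.ofReal ((1 + ‖ξ‖) ^ r * f ξ) := by
  set V := volume (ball (0 : EuclideanSpace ℝ (Fin 3)) 1)
  refine ⟨(V.toReal + 1) ^ p, by positivity, fun M hM f _ hf ↦ ?_⟩
  have hC : ENNReal.ofReal ((V.toReal + 1) ^ p) = (V + 1) ^ p := by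
    rw [← ENNReal.ofReal_rpow_of_nonneg (by positivity) (by linarith),
      ENNReal.ofReal_add ENNReal.toReal_nonneg zero_le_one, ENNReal.ofReal_toReal
        measure_ball_lt_top.ne, ENNReal.ofReal_one]
  rw [hC]
  refine lintegral_norm_mul_rpow_le volume hM hp1.le ?_ hf
  rw [finrank_euclideanSpace_fin]
  push_cast
  linarith

/-- For `r > 0` and `1 < p < (r+3)/4` there is `C = C(r, p) > 0` such that for any `M > 0`
and measurable `f : ℝ³ → ℝ` with `0 ≤ f ≤ M` a.e.,
`(∫ ‖ξ‖ f dξ)^p ≤ C M^(p-1) ∫ (1 + ‖ξ‖)^r f dξ`. -/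
theorem momentum_moment_bound (r p : ℝ) (hr : 0 < r) (hp1 : 1 < p) (hp2 : p < (r + 3) / 4) :
    ∃ C > (0:ℝ), ∀ M : ℝ, 0 < M → ∀ f : EuclideanSpace ℝ (Fin 3) → ℝ,
      Measurable f → (∀ᵐ ξ, 0 ≤ f ξ ∧ f ξ ≤ M) →
      (∫⁻ ξ, ENNReal.ofReal (‖ξ‖ * f ξ)) ^ p ≤
        ENNReal.ofReal C * ENNReal.ofReal (M ^ (p - 1)) *
          ∫⁻ ξ, ENNReal.ofReal ((1 + ‖ξ‖) ^ r * f ξ) :=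
  momentum_moment_bound_general r p hp1 hp2
end

section
/- Let (X, μ) be a measure space and let f, g : X → ℝ be measurable functions that are strictly positive μ-almost everywhere and integrable, and assume the function x ↦ P(f(x)|g(x)) is integrable. Then ( ∫_X |f − g| dμ )² ≤ 2 · ( ∫_X (f + g) dμ ) · ( ∫_X P(f|g) dμ ). -/
/-!
Writing `P(x|y) = y · klFun (x / y)` with `klFun t = t log t + 1 - t`, the pointwise bound
`(x - y)² ≤ 2 max(x, y) P(x|y)` reduces to `(t - 1)² ≤ 2 max(t, 1) klFun t`, which follows from
`log t ≥ 2(t - 1)/(t + 1)` for `t ≥ 1` (first term of the series of `log`) and from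
`log t ≥ sinh (log t) = (t - 1/t)/2` for `t ≤ 1`. Since `max(x, y) ≤ x + y`, this gives
`|f - g|² / (f + g) ≤ 2 P(f|g)`, and Cauchy–Schwarz applied to `|f - g| = √(f + g) · (|f - g| / √(f + g))`
concludes.
-/

open MeasureTheory Real

open InformationTheory

theorem two_mul_sub_one_div_add_one_le_log {t : ℝ} (ht : 1 ≤ t) :
    2 * (t - 1) / (t + 1) ≤ log t := by
  have ht' : 0 ≤ t - 1 := sub_nonneg.2 ht
  have h := le_hasSum (hasSum_log_one_add ht') 0 fun k _ => by positivity
  rw [add_sub_cancel, show t - 1 + 2 = t + 1 by ring] at h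
  simpa [mul_div_assoc] using h

theorem sub_inv_div_two_le_log {t : ℝ} (ht : 0 < t) (ht1 : t ≤ 1) : (t - t⁻¹) / 2 ≤ log t := by
  rw [← sinh_log ht]
  exact sinh_le_self_iff.2 (log_nonpos ht.le ht1)

theorem sq_sub_one_le_two_mul_max_mul_klFun {t : ℝ} (ht : 0 < t) :
    (t - 1) ^ 2 ≤ 2 * max t 1 * klFun t := by
  rw [klFun_apply]
  rcases le_total 1 t with h | h
  · have hlog := two_mul_sub_one_div_add_one_le_log h
    rw [div_le_iff₀ (by linarith)] at hlog
    rw [max_eq_left h]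
    nlinarith [mul_le_mul_of_nonneg_left hlog ht.le, sq_nonneg (t - 1)]
  · have hlog := sub_inv_div_two_le_log ht h
    rw [max_eq_right h]
    have : t * ((t - t⁻¹) / 2) = (t ^ 2 - 1) / 2 := by field_simp
    nlinarith [mul_le_mul_of_nonneg_left hlog ht.le]

theorem relPressure_eq_mul_klFun (x : ℝ) {y : ℝ} (hy : y ≠ 0) :
    relPressure x y = y * klFun (x / y) := by
  rcases eq_or_ne x 0 with rfl | hx
  · simp only [relPressure, log_zero, mul_zero, zero_sub, sub_zero, zero_div, klFun_zero, mul_one]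
    ring
  · rw [relPressure, klFun_apply, log_div hx hy]
    field_simp
    ring

theorem relPressure_nonneg {x y : ℝ} (hx : 0 ≤ x) (hy : 0 < y) : 0 ≤ relPressure x y := by
  rw [relPressure_eq_mul_klFun x hy.ne']
  exact mul_nonneg hy.le (klFun_nonneg (div_nonneg hx hy.le))

theorem sq_sub_le_two_mul_max_mul_relPressure {x y : ℝ} (hx : 0 < x) (hy : 0 < y) :
    (x - y) ^ 2 ≤ 2 * max x y * relPressure x y := by
  have hmax : max (x / y) 1 * y = max x y := by
    rw [max_mul_of_nonneg _ _ hy.le, div_mul_cancel₀ x hy.ne', one_mul]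
  calc (x - y) ^ 2 = y ^ 2 * (x / y - 1) ^ 2 := by field_simp
    _ ≤ y ^ 2 * (2 * max (x / y) 1 * klFun (x / y)) := by
      gcongr
      exact sq_sub_one_le_two_mul_max_mul_klFun (div_pos hx hy)
    _ = 2 * (max (x / y) 1 * y) * (y * klFun (x / y)) := by ring
    _ = 2 * max x y * relPressure x y := by rw [hmax, relPressure_eq_mul_klFun x hy.ne']

theorem sq_sub_div_add_le_two_mul_relPressure {x y : ℝ} (hx : 0 < x) (hy : 0 < y) :
    (x - y) ^ 2 / (x + y) ≤ 2 * relPressure x y := by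
  rw [div_le_iff₀ (by positivity)]
  calc (x - y) ^ 2 ≤ 2 * max x y * relPressure x y := sq_sub_le_two_mul_max_mul_relPressure hx hy
    _ ≤ 2 * (x + y) * relPressure x y := by
      gcongr
      · exact relPressure_nonneg hx.le hy
      · exact max_le_add_of_nonneg hx.le hy.le
    _ = 2 * relPressure x y * (x + y) := by ring

section CauchySchwarz

variable {X : Type*} [MeasurableSpace X] {μ : Measure X}

theorem sq_integral_mul_le_integral_sq_mul_integral_sq {a b : X → ℝ}
    (ha : MemLp a 2 μ) (hb : MemLp b 2 μ) :
    (∫ x, a x * b x ∂μ) ^ 2 ≤ (∫ x, a x ^ 2 ∂μ) * ∫ x, b x ^ 2 ∂μ := by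
  have hp : ENNReal.ofReal 2 = 2 := by norm_num
  have holder := integral_mul_le_Lp_mul_Lq_of_nonneg Real.HolderConjugate.two_two
    (Filter.Eventually.of_forall fun x => abs_nonneg (a x))
    (Filter.Eventually.of_forall fun x => abs_nonneg (b x))
    (hp ▸ ha.abs) (hp ▸ hb.abs)
  simp only [rpow_two, sq_abs] at holder
  have hA : 0 ≤ ∫ x, a x ^ 2 ∂μ := integral_nonneg fun x => sq_nonneg _
  have hB : 0 ≤ ∫ x, b x ^ 2 ∂μ := integral_nonneg fun x => sq_nonneg _
  calc (∫ x, a x * b x ∂μ) ^ 2 ≤ (∫ x, |a x| * |b x| ∂μ) ^ 2 := by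
        rw [← sq_abs]
        gcongr
        simpa only [abs_mul] using abs_integral_le_integral_abs (f := fun x => a x * b x)
    _ ≤ ((∫ x, a x ^ 2 ∂μ) ^ (1 / 2 : ℝ) * (∫ x, b x ^ 2 ∂μ) ^ (1 / 2 : ℝ)) ^ 2 := by
        gcongr
    _ = (∫ x, a x ^ 2 ∂μ) * ∫ x, b x ^ 2 ∂μ := by
        rw [mul_pow, ← sqrt_eq_rpow, ← sqrt_eq_rpow, sq_sqrt hA, sq_sqrt hB]

theorem sq_integral_abs_le_integral_mul_integral_sq_div {w h : X → ℝ}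
    (hw : ∀ᵐ x ∂μ, 0 < w x) (hwi : Integrable w μ)
    (hhw : Integrable (fun x => h x ^ 2 / w x) μ) :
    (∫ x, |h x| ∂μ) ^ 2 ≤ (∫ x, w x ∂μ) * ∫ x, h x ^ 2 / w x ∂μ := by
  have hmemLp {v : X → ℝ} (hv : Integrable v μ) (hv0 : 0 ≤ᵐ[μ] v) :
      MemLp (fun x => √(v x)) 2 μ := by
    refine (memLp_two_iff_integrable_sq (continuous_sqrt.comp_aestronglyMeasurable hv.1)).2 ?_
    refine hv.congr ?_
    filter_upwards [hv0] with x hx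
    exact (sq_sqrt hx).symm
  have hw0 : 0 ≤ᵐ[μ] w := hw.mono fun x hx => hx.le
  have hhw0 : 0 ≤ᵐ[μ] fun x => h x ^ 2 / w x := hw.mono fun x hx => by positivity
  have hCS := sq_integral_mul_le_integral_sq_mul_integral_sq (hmemLp hwi hw0) (hmemLp hhw hhw0)
  have hprod : (fun x => √(w x) * √(h x ^ 2 / w x)) =ᵐ[μ] fun x => |h x| := by
    filter_upwards [hw] with x hx
    rw [← sqrt_mul hx.le, mul_div_cancel₀ _ hx.ne', sqrt_sq_eq_abs]
  rwa [integral_congr_ae hprod, integral_congr_ae (hw0.mono fun x hx => sq_sqrt hx),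
    integral_congr_ae (hhw0.mono fun x hx => sq_sqrt hx)] at hCS

end CauchySchwarz

theorem csiszar_kullback_pinsker_general {X : Type*} [MeasurableSpace X] (μ : Measure X)
    (f g : X → ℝ)
    (hfpos : ∀ᵐ x ∂μ, 0 < f x) (hgpos : ∀ᵐ x ∂μ, 0 < g x)
    (hfi : Integrable f μ) (hgi : Integrable g μ)
    (hPi : Integrable (fun x => relPressure (f x) (g x)) μ) :
    (∫ x, |f x - g x| ∂μ) ^ 2 ≤
      2 * (∫ x, (f x + g x) ∂μ) * ∫ x, relPressure (f x) (g x) ∂μ := by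
  have hpos : ∀ᵐ x ∂μ, 0 < f x ∧ 0 < g x := hfpos.and hgpos
  have hsum : ∀ᵐ x ∂μ, 0 < f x + g x := hpos.mono fun x hx => add_pos hx.1 hx.2
  have hbound : ∀ᵐ x ∂μ, (f x - g x) ^ 2 / (f x + g x) ≤ 2 * relPressure (f x) (g x) :=
    hpos.mono fun x hx => sq_sub_div_add_le_two_mul_relPressure hx.1 hx.2
  have hint : Integrable (fun x => (f x - g x) ^ 2 / (f x + g x)) μ := by
    refine (hPi.const_mul 2).mono' ?_ ?_
    · exact (((hfi.aemeasurable.sub hgi.aemeasurable).pow_const 2).div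
        (hfi.aemeasurable.add hgi.aemeasurable)).aestronglyMeasurable
    · filter_upwards [hsum, hbound] with x hx hxb
      rwa [Real.norm_of_nonneg (by positivity)]
  calc (∫ x, |f x - g x| ∂μ) ^ 2
      ≤ (∫ x, (f x + g x) ∂μ) * ∫ x, (f x - g x) ^ 2 / (f x + g x) ∂μ :=
        sq_integral_abs_le_integral_mul_integral_sq_div hsum (hfi.add hgi) hint
    _ ≤ (∫ x, (f x + g x) ∂μ) * ∫ x, 2 * relPressure (f x) (g x) ∂μ :=
        mul_le_mul_of_nonneg_left (integral_mono_ae hint (hPi.const_mul 2) hbound)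
          (integral_nonneg_of_ae (hsum.mono fun x hx => hx.le))
    _ = 2 * (∫ x, (f x + g x) ∂μ) * ∫ x, relPressure (f x) (g x) ∂μ := by
        rw [integral_const_mul]
        ring

/-- Csiszár–Kullback–Pinsker type inequality:
`(∫ |f - g|)² ≤ 2 (∫ (f + g)) (∫ P(f|g))`. -/
theorem csiszar_kullback_pinsker {X : Type*} [MeasurableSpace X] (μ : Measure X)
    (f g : X → ℝ) (hfm : Measurable f) (hgm : Measurable g)
    (hfpos : ∀ᵐ x ∂μ, 0 < f x) (hgpos : ∀ᵐ x ∂μ, 0 < g x)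
    (hfi : Integrable f μ) (hgi : Integrable g μ)
    (hPi : Integrable (fun x => relPressure (f x) (g x)) μ) :
    (∫ x, |f x - g x| ∂μ) ^ 2 ≤
      2 * (∫ x, (f x + g x) ∂μ) * ∫ x, relPressure (f x) (g x) ∂μ :=
  csiszar_kullback_pinsker_general μ f g hfpos hgpos hfi hgi hPi
end

section
/- Let (X, μ) be a measure space, let γ be a real number with 1 < γ ≤ 2, and let a, b : X → ℝ be measurable functions that are strictly positive μ-almost everywhere. Then ∫_X |a − b|^γ dμ ≤ ( ∫_X min{a^{γ−2}, b^{γ−2}}·(a − b)² dμ )^{γ/2} · ( ∫_X max{a^γ, b^γ} dμ )^{(2−γ)/2}, where all integrals take values in [0, ∞]. -/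
/-!
With `m = max a b` and `γ - 2 ≤ 0 ≤ γ` one has `min (a^(γ-2)) (b^(γ-2)) = m^(γ-2)` and
`max (a^γ) (b^γ) = m^γ`, so pointwise `|a - b|^γ = (m^(γ-2) (a-b)²)^(γ/2) (m^γ)^((2-γ)/2)`
exactly: the powers of `m` cancel. Hölder's inequality with the exponents `γ/2 + (2-γ)/2 = 1`
then gives the bound.
-/

open MeasureTheory Real
open scoped ENNReal

namespace Real

lemma rpow_max_of_nonpos {x y p : ℝ} (hx : 0 < x) (hy : 0 < y) (hp : p ≤ 0) :
    max x y ^ p = min (x ^ p) (y ^ p) := by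
  rcases le_total x y with hxy | hxy
  · rw [max_eq_right hxy, min_eq_right (rpow_le_rpow_of_nonpos hx hxy hp)]
  · rw [max_eq_left hxy, min_eq_left (rpow_le_rpow_of_nonpos hy hxy hp)]

lemma rpow_sub_two_mul_sq_rpow_half_mul_rpow_rpow {m γ : ℝ} (hm : 0 < m) (d : ℝ) :
    (m ^ (γ - 2) * d ^ 2) ^ (γ / 2) * (m ^ γ) ^ ((2 - γ) / 2) = |d| ^ γ := by
  rw [← sq_abs, ← rpow_two, mul_rpow (by positivity) (by positivity), ← rpow_mul hm.le,
    ← rpow_mul (abs_nonneg d), ← rpow_mul hm.le, mul_right_comm, ← rpow_add hm]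
  ring_nf
  rw [rpow_zero, one_mul]

lemma abs_sub_rpow_eq_min_mul_sq_rpow_mul_max_rpow {γ a b : ℝ} (hγ0 : 0 ≤ γ) (hγ2 : γ ≤ 2)
    (ha : 0 < a) (hb : 0 < b) :
    |a - b| ^ γ = (min (a ^ (γ - 2)) (b ^ (γ - 2)) * (a - b) ^ 2) ^ (γ / 2) *
      max (a ^ γ) (b ^ γ) ^ ((2 - γ) / 2) := by
  rw [← rpow_max_of_nonpos ha hb (by linarith), ← rpow_max ha.le hb.le hγ0,
    rpow_sub_two_mul_sq_rpow_half_mul_rpow_rpow (lt_max_of_lt_left ha)]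

end Real

/-- Hölder-type estimate converting relative-entropy control into an `L^γ` distance:
for `1 < γ ≤ 2` and a.e. positive measurable `a, b`,
`∫ |a - b|^γ ≤ (∫ min{a^(γ-2), b^(γ-2)} (a - b)²)^(γ/2) (∫ max{a^γ, b^γ})^((2-γ)/2)`. -/
theorem lgamma_distance_bound {X : Type*} [MeasurableSpace X] (μ : Measure X)
    (γ : ℝ) (hγ1 : 1 < γ) (hγ2 : γ ≤ 2)
    (a b : X → ℝ) (ham : Measurable a) (hbm : Measurable b)
    (hapos : ∀ᵐ x ∂μ, 0 < a x) (hbpos : ∀ᵐ x ∂μ, 0 < b x) :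
    ∫⁻ x, ENNReal.ofReal (|a x - b x| ^ γ) ∂μ ≤
      (∫⁻ x, ENNReal.ofReal
          (min (a x ^ (γ - 2)) (b x ^ (γ - 2)) * (a x - b x) ^ 2) ∂μ) ^ (γ / 2) *
        (∫⁻ x, ENNReal.ofReal (max (a x ^ γ) (b x ^ γ)) ∂μ) ^ ((2 - γ) / 2) := by
  have hγ0 : 0 ≤ γ := by linarith
  calc ∫⁻ x, ENNReal.ofReal (|a x - b x| ^ γ) ∂μ
      = ∫⁻ x, ENNReal.ofReal (min (a x ^ (γ - 2)) (b x ^ (γ - 2)) * (a x - b x) ^ 2) ^ (γ / 2) *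
          ENNReal.ofReal (max (a x ^ γ) (b x ^ γ)) ^ ((2 - γ) / 2) ∂μ := by
        refine lintegral_congr_ae ?_
        filter_upwards [hapos, hbpos] with x hax hbx
        rw [ENNReal.ofReal_rpow_of_nonneg (by positivity) (by positivity),
          ENNReal.ofReal_rpow_of_nonneg (by positivity) (by linarith), ← ENNReal.ofReal_mul (by positivity),
          abs_sub_rpow_eq_min_mul_sq_rpow_mul_max_rpow hγ0 hγ2 hax hbx]
    _ ≤ _ := ENNReal.lintegral_mul_norm_pow_le (by fun_prop) (by fun_prop)
        (by positivity) (by linarith) (by ring)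
end
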